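/- In the badcodeword construction, let φ = (ψ1 + ψ2)/‖ψ1 + ψ2‖. Then for every e ∈ C^⊥ \ C, |⟨φ, XZ(e)φ⟩| ≤ 3/4. -/

import Mathlib

open scoped BigOperators
open Matrix

/-- `omg p` is the complex primitive `p`-th root of unity `exp(2πi/p)`. -/
noncomputable def omg (p : ℕ) : ℂ := Complex.exp (2 * Real.pi * Complex.I / p)

/-- The generalized Pauli matrix `XZ(u) = X^{a_1}Z^{b_1} ⊗ ⋯ ⊗ X^{a_n}Z^{b_n}`
for `u = ((a_1,b_1),…,(a_n,b_n)) ∈ (Z_p²)ⁿ`, written out entrywise with respect to the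
computational basis of `(ℂ^p)^{⊗n} ≃ ℂ^{p^n}`, whose coordinates are indexed by
`Fin n → ZMod p`.  (It is the matrix determined by
`XZ(u) |i₁ … iₙ⟩ = ∏_t ω^{b_t i_t} |i₁+a₁, …, iₙ+aₙ⟩`.) -/
noncomputable def XZ (p n : ℕ) (u : Fin n → ZMod p × ZMod p) :
    Matrix (Fin n → ZMod p) (Fin n → ZMod p) ℂ :=
  fun j i => ∏ t : Fin n, if j t = i t + (u t).1 then omg p ^ ((u t).2 * i t).val else 0

/-- The symplectic inner product `⟨u,v⟩ = Σ b_i c_i − a_i d_i` on `Z_p^{2n}`. -/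
def symp (p n : ℕ) (u v : Fin n → ZMod p × ZMod p) : ZMod p :=
  ∑ t : Fin n, ((u t).2 * (v t).1 - (u t).1 * (v t).2)

/-- The standard Hermitian inner product on `I → ℂ`. -/
noncomputable def cinner {I : Type*} [Fintype I] (x y : I → ℂ) : ℂ :=
  ∑ i, (starRingEnd ℂ) (x i) * y i

/-!
`ψ1` is a stabilizer state of the Lagrangian `Cmax`: `⟨ψ1, XZ(v) ψ1⟩` vanishes for `v ∉ Cmax`,
because some `XZ(c)`, `c ∈ Cmax`, fixes `ψ1` up to a phase but commutes with `XZ(v)` only up to a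
nontrivial `p`-th root of unity. Hence the translates `XZ(x) ψ1`, `x ∈ R`, are orthonormal, and as
`R × Cmax ≃ C^⊥` gives `|R| = p^k`, `ψ2` is a unit vector with `⟨ψ1, ψ2⟩ = t := p^{-k/2}`.

For `e ∉ C`, at most one translate `XZ(x) ψ1` is not orthogonal to `XZ(±e) ψ1`, so both cross
terms of `⟨ψ1 + ψ2, XZ(e) (ψ1 + ψ2)⟩` have modulus at most `t`, and one diagonal term vanishes:
`⟨ψ1, XZ(e) ψ1⟩` if `e ∉ Cmax`, and `⟨ψ2, XZ(e) ψ2⟩ = t² (∑_{x ∈ R} ω^{⟨e,x⟩}) ⟨ψ1, XZ(e) ψ1⟩`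
if `e ∈ Cmax`, the character `x ↦ ω^{⟨e,x⟩}` of `C^⊥ / Cmax` being nontrivial as
`e ∉ C = (C^⊥)^⊥`. So `|⟨φ, XZ(e) φ⟩| ≤ (1 + 2t) / (2 + 2t) ≤ 3/4`.
-/

open Finset ZMod

section Cinner

variable {I : Type*} [Fintype I]

lemma cinner_eq_star_dotProduct (x y : I → ℂ) : cinner x y = star x ⬝ᵥ y := rfl

lemma cinner_add_left (x y z : I → ℂ) : cinner (x + y) z = cinner x z + cinner y z := by
  simp only [cinner_eq_star_dotProduct, star_add, add_dotProduct]

lemma cinner_add_right (x y z : I → ℂ) : cinner x (y + z) = cinner x y + cinner x z :=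
  dotProduct_add _ _ _

lemma cinner_smul_left (a : ℂ) (x y : I → ℂ) :
    cinner (a • x) y = (starRingEnd ℂ) a * cinner x y := by
  simp only [cinner_eq_star_dotProduct, star_smul, smul_dotProduct, smul_eq_mul,
    starRingEnd_apply]

lemma cinner_smul_right (a : ℂ) (x y : I → ℂ) : cinner x (a • y) = a * cinner x y :=
  dotProduct_smul _ _ _

lemma cinner_sum_left {ι : Type*} (s : Finset ι) (f : ι → I → ℂ) (y : I → ℂ) :
    cinner (∑ i ∈ s, f i) y = ∑ i ∈ s, cinner (f i) y := by
  simp only [cinner_eq_star_dotProduct, star_sum, sum_dotProduct]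

lemma cinner_sum_right {ι : Type*} (s : Finset ι) (x : I → ℂ) (f : ι → I → ℂ) :
    cinner x (∑ i ∈ s, f i) = ∑ i ∈ s, cinner x (f i) :=
  dotProduct_sum _ _ _

lemma cinner_conj_symm (x y : I → ℂ) : cinner y x = (starRingEnd ℂ) (cinner x y) :=
  star_dotProduct y x

lemma cinner_mulVec_left [DecidableEq I] (M : Matrix I I ℂ) (x y : I → ℂ) :
    cinner (M *ᵥ x) y = cinner x (Mᴴ *ᵥ y) := by
  simp only [cinner_eq_star_dotProduct, star_mulVec, dotProduct_mulVec]

lemma cinner_eq_inner (x y : I → ℂ) :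
    cinner x y = inner ℂ (WithLp.toLp 2 x) (WithLp.toLp 2 y) := by
  rw [EuclideanSpace.inner_eq_star_dotProduct, dotProduct_comm]
  rfl

lemma norm_cinner_le_one {x y : I → ℂ} (hx : cinner x x = 1) (hy : cinner y y = 1) :
    ‖cinner x y‖ ≤ 1 := by
  have hnorm : ∀ z : I → ℂ, cinner z z = 1 → ‖WithLp.toLp 2 z‖ = 1 := fun z hz => by
    rw [← pow_eq_one_iff_of_nonneg (norm_nonneg _) two_ne_zero,
      ← inner_self_eq_norm_sq (𝕜 := ℂ), ← cinner_eq_inner, hz, RCLike.one_re]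
  simpa [cinner_eq_inner, hnorm x hx, hnorm y hy] using
    norm_inner_le_norm (𝕜 := ℂ) (WithLp.toLp 2 x) (WithLp.toLp 2 y)

lemma norm_cinner_mulVec_le_one [DecidableEq I] {M : Matrix I I ℂ} (hM : Mᴴ * M = 1)
    {x : I → ℂ} (hx : cinner x x = 1) : ‖cinner x (M *ᵥ x)‖ ≤ 1 :=
  norm_cinner_le_one hx (by rw [cinner_mulVec_left, mulVec_mulVec, hM, one_mulVec, hx])

lemma norm_cinner_add_mulVec_add_le (M : Matrix I I ℂ) (x y : I → ℂ) :
    ‖cinner (x + y) (M *ᵥ (x + y))‖ ≤ ‖cinner x (M *ᵥ x)‖ + ‖cinner x (M *ᵥ y)‖ +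
      ‖cinner y (M *ᵥ x)‖ + ‖cinner y (M *ᵥ y)‖ := by
  rw [mulVec_add, cinner_add_left, cinner_add_right, cinner_add_right, ← add_assoc]
  exact (norm_add₄_le ..).trans_eq (by ring)

lemma cinner_ofReal_smul_mulVec (M : Matrix I I ℂ) (r : ℝ) (x : I → ℂ) :
    cinner ((r : ℂ) • x) (M *ᵥ ((r : ℂ) • x)) = (r ^ 2 : ℝ) * cinner x (M *ᵥ x) := by
  rw [mulVec_smul, cinner_smul_left, cinner_smul_right, Complex.conj_ofReal, ← mul_assoc]
  push_cast
  ring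

lemma norm_cinner_normalize_add_le_three_quarters [DecidableEq I] {M : Matrix I I ℂ}
    {ψ₁ ψ₂ φ : I → ℂ} {t : ℝ} (hM : Mᴴ * M = 1) (ht : 0 ≤ t)
    (h₁ : cinner ψ₁ ψ₁ = 1) (h₂ : cinner ψ₂ ψ₂ = 1) (h₁₂ : cinner ψ₁ ψ₂ = t)
    (hc₁ : ‖cinner ψ₁ (M *ᵥ ψ₂)‖ ≤ t) (hc₂ : ‖cinner ψ₂ (M *ᵥ ψ₁)‖ ≤ t)
    (hdiag : cinner ψ₁ (M *ᵥ ψ₁) = 0 ∨ cinner ψ₂ (M *ᵥ ψ₂) = 0)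
    (hφ : φ = ((Real.sqrt ((cinner (ψ₁ + ψ₂) (ψ₁ + ψ₂)).re) : ℝ) : ℂ)⁻¹ • (ψ₁ + ψ₂)) :
    ‖cinner φ (M *ᵥ φ)‖ ≤ 3 / 4 := by
  have ht1 : t ≤ 1 := by
    simpa [h₁₂, abs_of_nonneg ht] using norm_cinner_le_one h₁ h₂
  have hsq : cinner (ψ₁ + ψ₂) (ψ₁ + ψ₂) = (2 + 2 * t : ℝ) := by
    rw [cinner_add_left, cinner_add_right, cinner_add_right, cinner_conj_symm ψ₁ ψ₂, h₁, h₂,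
      h₁₂, Complex.conj_ofReal]
    push_cast
    ring
  have hnum : ‖cinner (ψ₁ + ψ₂) (M *ᵥ (ψ₁ + ψ₂))‖ ≤ 1 + 2 * t := by
    refine (norm_cinner_add_mulVec_add_le M ψ₁ ψ₂).trans ?_
    have hd₁ := norm_cinner_mulVec_le_one hM h₁
    have hd₂ := norm_cinner_mulVec_le_one hM h₂
    rcases hdiag with h | h <;> rw [h, norm_zero] <;> linarith
  rw [hφ, hsq, Complex.ofReal_re, ← Complex.ofReal_inv, cinner_ofReal_smul_mulVec, norm_mul,
    Complex.norm_real, inv_pow, Real.sq_sqrt (by linarith), Real.norm_of_nonneg (by positivity),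
    inv_mul_le_iff₀ (by linarith)]
  linarith

end Cinner

lemma norm_ofReal_mul_le {t : ℝ} (ht : 0 ≤ t) {z : ℂ} (hz : ‖z‖ ≤ 1) : ‖(t : ℂ) * z‖ ≤ t := by
  rw [norm_mul, Complex.norm_real, Real.norm_of_nonneg ht]
  exact mul_le_of_le_one_right ht hz

lemma norm_sum_le_one_of_unique_nonzero {ι : Type*} (s : Finset ι) (f : ι → ℂ)
    (hf : ∀ i ∈ s, ‖f i‖ ≤ 1) (hsupp : ∀ i ∈ s, ∀ j ∈ s, f i ≠ 0 → f j ≠ 0 → i = j) :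
    ‖∑ i ∈ s, f i‖ ≤ 1 := by
  by_cases h : ∃ i ∈ s, f i ≠ 0
  · obtain ⟨i, hi, hfi⟩ := h
    rw [sum_eq_single_of_mem i hi fun j hj hji =>
      by_contra fun hfj => hji (hsupp j hj i hi hfj hfi)]
    exact hf i hi
  · push Not at h
    simp [sum_eq_zero h]

lemma AddChar.map_sum_eq_prod {A M ι : Type*} [AddCommMonoid A] [CommMonoid M]
    (ψ : AddChar A M) (s : Finset ι) (f : ι → A) : ψ (∑ i ∈ s, f i) = ∏ i ∈ s, ψ (f i) := by
  induction s using Finset.cons_induction <;> simp [*, AddChar.map_add_eq_mul]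

section Pauli

variable {p n : ℕ}

def xPart : (Fin n → ZMod p × ZMod p) →ₗ[ZMod p] Fin n → ZMod p :=
  LinearMap.pi fun t => LinearMap.fst _ _ _ ∘ₗ LinearMap.proj t

def zPart : (Fin n → ZMod p × ZMod p) →ₗ[ZMod p] Fin n → ZMod p :=
  LinearMap.pi fun t => LinearMap.snd _ _ _ ∘ₗ LinearMap.proj t

@[simp] lemma xPart_apply (u : Fin n → ZMod p × ZMod p) (t : Fin n) : xPart u t = (u t).1 := rfl

@[simp] lemma zPart_apply (u : Fin n → ZMod p × ZMod p) (t : Fin n) : zPart u t = (u t).2 := rfl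

lemma symp_eq_dotProduct (u v : Fin n → ZMod p × ZMod p) :
    symp p n u v = zPart u ⬝ᵥ xPart v - xPart u ⬝ᵥ zPart v := by
  simp [symp, dotProduct, sum_sub_distrib]

lemma symp_comm (u v : Fin n → ZMod p × ZMod p) : symp p n u v = -symp p n v u := by
  rw [symp_eq_dotProduct, symp_eq_dotProduct, dotProduct_comm (zPart v),
    dotProduct_comm (xPart v)]
  ring

variable [NeZero p]

lemma omg_pow_val (a : ZMod p) : omg p ^ a.val = stdAddChar a := by
  rw [stdAddChar_apply, toCircle_apply, omg, ← Complex.exp_nat_mul]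
  congr 1
  ring

lemma stdAddChar_eq_one_iff {a : ZMod p} : stdAddChar a = 1 ↔ a = 0 :=
  injective_stdAddChar.eq_iff' (AddChar.map_zero_eq_one _)

lemma XZ_apply (u : Fin n → ZMod p × ZMod p) (j i : Fin n → ZMod p) :
    XZ p n u j i = if j = i + xPart u then stdAddChar (zPart u ⬝ᵥ i) else 0 := by
  simp only [XZ, omg_pow_val, prod_ite_zero, funext_iff, Pi.add_apply, xPart_apply, mem_univ,
    true_implies, dotProduct, zPart_apply, AddChar.map_sum_eq_prod]

lemma XZ_zero : XZ p n 0 = 1 := by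
  ext j i
  simp [XZ_apply, one_apply]

lemma XZ_mul (u v : Fin n → ZMod p × ZMod p) :
    XZ p n u * XZ p n v = stdAddChar (zPart u ⬝ᵥ xPart v) • XZ p n (u + v) := by
  ext j i
  rw [mul_apply, sum_eq_single (i + xPart v) (fun m _ hm => by simp [XZ_apply v, hm])
    (by simp)]
  simp only [XZ_apply, Matrix.smul_apply, map_add, smul_eq_mul, if_true, ← add_assoc,
    add_right_comm i (xPart u)]
  split_ifs
  · simp only [dotProduct_add, add_dotProduct, AddChar.map_add_eq_mul]
    ring
  · simp

lemma XZ_mulVec_XZ_mulVec (u v : Fin n → ZMod p × ZMod p) (x : (Fin n → ZMod p) → ℂ) :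
    XZ p n u *ᵥ (XZ p n v *ᵥ x) = stdAddChar (zPart u ⬝ᵥ xPart v) • (XZ p n (u + v) *ᵥ x) := by
  rw [mulVec_mulVec, XZ_mul, smul_mulVec]

lemma XZ_conjTranspose (u : Fin n → ZMod p × ZMod p) :
    (XZ p n u)ᴴ = stdAddChar (zPart u ⬝ᵥ xPart u) • XZ p n (-u) := by
  ext j i
  have hcond : i = j + xPart u ↔ j = i + xPart (-u) := by
    rw [map_neg, ← sub_eq_add_neg, eq_sub_iff_add_eq, eq_comm]
  simp only [conjTranspose_apply, Matrix.smul_apply, XZ_apply, hcond, smul_eq_mul]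
  split_ifs with h
  · rw [h, map_neg, ← starRingEnd_apply, ← AddChar.map_neg_eq_conj, ← AddChar.map_add_eq_mul]
    congr 1
    simp only [dotProduct_add, dotProduct_neg, neg_dotProduct, map_neg]
    ring
  · simp

lemma XZ_conjTranspose_mul (u v : Fin n → ZMod p × ZMod p) :
    (XZ p n u)ᴴ * XZ p n v = stdAddChar (zPart u ⬝ᵥ xPart (u - v)) • XZ p n (v - u) := by
  rw [XZ_conjTranspose, Matrix.smul_mul, XZ_mul, smul_smul, ← AddChar.map_add_eq_mul,
    neg_add_eq_sub, map_neg, neg_dotProduct, map_sub, dotProduct_sub, ← sub_eq_add_neg]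

lemma XZ_conjTranspose_mul_self (u : Fin n → ZMod p × ZMod p) :
    (XZ p n u)ᴴ * XZ p n u = 1 := by
  simp [XZ_conjTranspose_mul, XZ_zero]

lemma XZ_conjTranspose_mul_mul_self (u v : Fin n → ZMod p × ZMod p) :
    (XZ p n u)ᴴ * XZ p n v * XZ p n u = stdAddChar (symp p n v u) • XZ p n v := by
  rw [XZ_conjTranspose_mul, Matrix.smul_mul, XZ_mul, smul_smul, ← AddChar.map_add_eq_mul,
    sub_add_cancel, symp_eq_dotProduct, map_sub, map_sub]
  congr 2
  simp only [dotProduct_sub, sub_dotProduct, dotProduct_comm (xPart v) (zPart u)]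
  ring

lemma cinner_XZ_mulVec_XZ_mulVec (u v : Fin n → ZMod p × ZMod p)
    (x y : (Fin n → ZMod p) → ℂ) :
    cinner (XZ p n u *ᵥ x) (XZ p n v *ᵥ y) =
      stdAddChar (zPart u ⬝ᵥ xPart (u - v)) * cinner x (XZ p n (v - u) *ᵥ y) := by
  rw [cinner_mulVec_left, mulVec_mulVec, XZ_conjTranspose_mul, smul_mulVec, cinner_smul_right]

lemma cinner_XZ_mulVec_XZ_mulVec_self (u : Fin n → ZMod p × ZMod p)
    (x y : (Fin n → ZMod p) → ℂ) : cinner (XZ p n u *ᵥ x) (XZ p n u *ᵥ y) = cinner x y := by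
  rw [cinner_mulVec_left, mulVec_mulVec, XZ_conjTranspose_mul_self, one_mulVec]

lemma cinner_XZ_mulVec_conj (u v : Fin n → ZMod p × ZMod p) (x : (Fin n → ZMod p) → ℂ) :
    cinner (XZ p n u *ᵥ x) (XZ p n v *ᵥ (XZ p n u *ᵥ x)) =
      stdAddChar (symp p n v u) * cinner x (XZ p n v *ᵥ x) := by
  rw [cinner_mulVec_left, mulVec_mulVec, mulVec_mulVec, XZ_conjTranspose_mul_mul_self,
    smul_mulVec, cinner_smul_right]

end Pauli

section Symplectic

variable (p n : ℕ)

def sympForm : LinearMap.BilinForm (ZMod p) (Fin n → ZMod p × ZMod p) :=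
  (dotProductBilin (ZMod p) (ZMod p)).compl₁₂ zPart xPart -
    (dotProductBilin (ZMod p) (ZMod p)).compl₁₂ xPart zPart

variable {p n}

@[simp] lemma sympForm_apply (u v : Fin n → ZMod p × ZMod p) :
    sympForm p n u v = symp p n u v := by
  simp [sympForm, symp_eq_dotProduct]

lemma mem_orthogonal_sympForm {W : Submodule (ZMod p) (Fin n → ZMod p × ZMod p)}
    {v : Fin n → ZMod p × ZMod p} :
    v ∈ (sympForm p n).orthogonal W ↔ ∀ w ∈ W, symp p n w v = 0 := by
  simp [LinearMap.BilinForm.mem_orthogonal_iff]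

lemma sympForm_isRefl : (sympForm p n).IsRefl := fun u v h => by
  rw [sympForm_apply] at h ⊢
  rw [symp_comm, h, neg_zero]

lemma sympForm_nondegenerate : (sympForm p n).Nondegenerate := by
  refine (sympForm_isRefl (p := p) (n := n)).nondegenerate_iff_separatingLeft.mpr
    fun m hm => funext fun t => ?_
  have hx := hm (Pi.single t (1, 0))
  have hz := hm (Pi.single t (0, 1))
  simp [symp, Pi.single_apply, apply_ite Prod.fst, apply_ite Prod.snd] at hx hz
  exact Prod.ext hz hx

variable [Fact p.Prime]

lemma finrank_symplectic : Module.finrank (ZMod p) (Fin n → ZMod p × ZMod p) = 2 * n := by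
  rw [Module.finrank_pi_fintype, sum_const, card_univ, Fintype.card_fin, Module.finrank_prod,
    Module.finrank_self, smul_eq_mul, mul_comm]

lemma finrank_of_orthogonal_eq_self {W : Submodule (ZMod p) (Fin n → ZMod p × ZMod p)}
    (hW : (sympForm p n).orthogonal W = W) : Module.finrank (ZMod p) W = n := by
  have h := LinearMap.BilinForm.finrank_orthogonal sympForm_nondegenerate W
  rw [hW, finrank_symplectic] at h
  omega

lemma exists_symp_ne_zero_of_notMem {C : Submodule (ZMod p) (Fin n → ZMod p × ZMod p)}
    {e : Fin n → ZMod p × ZMod p} (he : e ∉ C) :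
    ∃ v ∈ (sympForm p n).orthogonal C, symp p n e v ≠ 0 := by
  by_contra! h
  refine he ?_
  rw [← LinearMap.BilinForm.orthogonal_orthogonal sympForm_nondegenerate sympForm_isRefl C,
    mem_orthogonal_sympForm]
  intro v hv
  rw [symp_comm, h v hv, neg_zero]

end Symplectic

section Transversal

variable {V : Type*} [AddCommGroup V]

structure IsCosetTransversal (H K : AddSubgroup V) (R : Finset V) : Prop where
  mem : ∀ x ∈ R, x ∈ K
  existsUnique : ∀ v ∈ K, ∃! x, x ∈ R ∧ v - x ∈ H

namespace IsCosetTransversal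

variable {H K : AddSubgroup V} {R : Finset V}

lemma eq_of_sub_mem (hR : IsCosetTransversal H K R) {x y : V} (hx : x ∈ R) (hy : y ∈ R)
    (hxy : x - y ∈ H) : x = y := by
  obtain ⟨z, -, huniq⟩ := hR.existsUnique x (hR.mem x hx)
  exact (huniq x ⟨hx, by simp⟩).trans (huniq y ⟨hy, hxy⟩).symm

noncomputable def prodEquiv (hR : IsCosetTransversal H K R) (hHK : H ≤ K) : R × H ≃ K :=
  Equiv.ofBijective (fun q => ⟨q.1 + q.2, K.add_mem (hR.mem _ q.1.2) (hHK q.2.2)⟩) <| by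
    constructor
    · rintro ⟨⟨x, hx⟩, ⟨h, hh⟩⟩ ⟨⟨y, hy⟩, ⟨h', hh'⟩⟩ hxy
      have hsum : x + h = y + h' := congrArg Subtype.val hxy
      have hxy : x = y := hR.eq_of_sub_mem hx hy <| by
        rw [show x - y = h' - h by rw [sub_eq_sub_iff_add_eq_add, hsum, add_comm]]
        exact H.sub_mem hh' hh
      subst hxy
      simp [add_left_cancel hsum]
    · rintro ⟨v, hv⟩
      obtain ⟨x, ⟨hx, hvx⟩, -⟩ := hR.existsUnique v hv
      exact ⟨⟨⟨x, hx⟩, ⟨v - x, hvx⟩⟩, Subtype.ext (add_sub_cancel x v)⟩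

@[simp] lemma coe_prodEquiv_apply (hR : IsCosetTransversal H K R) (hHK : H ≤ K) (q : R × H) :
    (hR.prodEquiv hHK q : V) = q.1 + q.2 := rfl

lemma card_mul_natCard (hR : IsCosetTransversal H K R) (hHK : H ≤ K) :
    #R * Nat.card H = Nat.card K := by
  rw [← Nat.card_congr (hR.prodEquiv hHK), Nat.card_prod, Nat.card_eq_finsetCard]

lemma sum_addChar_eq_zero [Finite V] (hR : IsCosetTransversal H K R) (hHK : H ≤ K)
    (ψ : AddChar V ℂ) (hH : ∀ h ∈ H, ψ h = 1) (hK : ∃ v ∈ K, ψ v ≠ 1) :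
    ∑ x ∈ R, ψ x = 0 := by
  have := Fintype.ofFinite K
  have := Fintype.ofFinite H
  obtain ⟨v, hv, hψv⟩ := hK
  have hsum := AddChar.sum_eq_zero_of_ne_one (ψ := ψ.compAddMonoidHom K.subtype)
    (AddChar.ne_one_iff.mpr ⟨⟨v, hv⟩, hψv⟩)
  rw [← (hR.prodEquiv hHK).sum_comp, Fintype.sum_prod_type] at hsum
  simp only [AddChar.compAddMonoidHom_apply, AddSubgroup.coe_subtype, coe_prodEquiv_apply,
    AddChar.map_add_eq_mul, hH _ (Subtype.property _), mul_one, sum_const, card_univ,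
    nsmul_eq_mul] at hsum
  rw [← mul_sum, sum_coe_sort R ψ] at hsum
  exact (mul_eq_zero.mp hsum).resolve_left (Nat.cast_ne_zero.mpr Fintype.card_ne_zero)

lemma card_eq_pow_finrank_sub {F W : Type*} [Field F] [Finite F] [AddCommGroup W] [Module F W]
    [Module.Finite F W] {H K : Submodule F W} {R : Finset W}
    (hR : IsCosetTransversal H.toAddSubgroup K.toAddSubgroup R) (hHK : H ≤ K) :
    #R = Nat.card F ^ (Module.finrank F K - Module.finrank F H) := by
  have hcard := hR.card_mul_natCard hHK
  change #R * Nat.card H = Nat.card K at hcard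
  rw [Module.natCard_eq_pow_finrank (K := F) (V := H),
    Module.natCard_eq_pow_finrank (K := F) (V := K),
    ← Nat.sub_add_cancel (Submodule.finrank_mono hHK), pow_add] at hcard
  exact Nat.eq_of_mul_eq_mul_right (pow_pos Nat.card_pos _) hcard

end IsCosetTransversal

end Transversal

section CodeState

variable {p n : ℕ}

lemma IsCosetTransversal.card_eq_pow_of_orthogonal [Fact p.Prime] {k : ℕ} (hkn : k ≤ n)
    {C L : Submodule (ZMod p) (Fin n → ZMod p × ZMod p)} {R : Finset (Fin n → ZMod p × ZMod p)}
    (hC : Module.finrank (ZMod p) C = n - k) (hL : (sympForm p n).orthogonal L = L)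
    (hLC : L ≤ (sympForm p n).orthogonal C)
    (hR : IsCosetTransversal L.toAddSubgroup ((sympForm p n).orthogonal C).toAddSubgroup R) :
    #R = p ^ k := by
  rw [hR.card_eq_pow_finrank_sub hLC, Nat.card_zmod, finrank_of_orthogonal_eq_self hL,
    LinearMap.BilinForm.finrank_orthogonal sympForm_nondegenerate, finrank_symplectic, hC]
  congr 1
  omega

variable [NeZero p] {ψ : (Fin n → ZMod p) → ℂ}

lemma IsCosetTransversal.sum_stdAddChar_symp_eq_zero
    {H K : AddSubgroup (Fin n → ZMod p × ZMod p)} {R : Finset (Fin n → ZMod p × ZMod p)}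
    (hR : IsCosetTransversal H K R) (hHK : H ≤ K) {e : Fin n → ZMod p × ZMod p}
    (hH : ∀ h ∈ H, symp p n h e = 0) (hK : ∃ v ∈ K, symp p n e v ≠ 0) :
    ∑ x ∈ R, stdAddChar (symp p n e x) = 0 := by
  obtain ⟨v, hv, hev⟩ := hK
  simpa using hR.sum_addChar_eq_zero hHK
    (stdAddChar.compAddMonoidHom (sympForm p n e).toAddMonoidHom)
    (fun h hh => by simp [symp_comm e h, hH h hh])
    ⟨v, hv, by simpa [stdAddChar_eq_one_iff] using hev⟩

lemma cinner_XZ_mulVec_eq_zero_of_symp_ne_zero (hψ : cinner ψ ψ = 1)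
    {c v : Fin n → ZMod p × ZMod p} {lam : ℂ} (hc : XZ p n c *ᵥ ψ = lam • ψ)
    (hcv : symp p n c v ≠ 0) : cinner ψ (XZ p n v *ᵥ ψ) = 0 := by
  have hlam : starRingEnd ℂ lam * lam = 1 := by
    have h := cinner_XZ_mulVec_XZ_mulVec_self c ψ ψ
    rwa [hc, cinner_smul_left, cinner_smul_right, hψ, mul_one] at h
  have hconj := cinner_XZ_mulVec_conj c v ψ
  rw [hc, mulVec_smul, cinner_smul_left, cinner_smul_right, ← mul_assoc, hlam, one_mul] at hconj
  refine eq_zero_of_mul_eq_self_left ?_ hconj.symm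
  rwa [Ne, stdAddChar_eq_one_iff, symp_comm, neg_eq_zero]

lemma cinner_XZ_mulVec_eq_zero_of_notMem (hψ : cinner ψ ψ = 1)
    {L : Submodule (ZMod p) (Fin n → ZMod p × ZMod p)}
    (hL : ∀ u, (∀ c ∈ L, symp p n c u = 0) → u ∈ L)
    (heig : ∀ c ∈ L, ∃ lam : ℂ, XZ p n c *ᵥ ψ = lam • ψ) {v : Fin n → ZMod p × ZMod p}
    (hv : v ∉ L) : cinner ψ (XZ p n v *ᵥ ψ) = 0 := by
  obtain ⟨c, hc, hcv⟩ : ∃ c ∈ L, symp p n c v ≠ 0 := by simpa using mt (hL v) hv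
  obtain ⟨lam, hlam⟩ := heig c hc
  exact cinner_XZ_mulVec_eq_zero_of_symp_ne_zero hψ hlam hcv

noncomputable def sumXZ (R : Finset (Fin n → ZMod p × ZMod p)) (ψ : (Fin n → ZMod p) → ℂ) :
    (Fin n → ZMod p) → ℂ :=
  ∑ x ∈ R, XZ p n x *ᵥ ψ

variable {S : Submodule (ZMod p) (Fin n → ZMod p × ZMod p)}
  {R : Finset (Fin n → ZMod p × ZMod p)}

lemma cinner_sumXZ_self (hψ : cinner ψ ψ = 1) (hstab : ∀ v ∉ S, cinner ψ (XZ p n v *ᵥ ψ) = 0)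
    (hR : ∀ x ∈ R, ∀ y ∈ R, x - y ∈ S → x = y) : cinner (sumXZ R ψ) (sumXZ R ψ) = #R := by
  rw [sumXZ, cinner_sum_left, card_eq_sum_ones, Nat.cast_sum]
  refine sum_congr rfl fun x hx => ?_
  rw [cinner_sum_right, sum_eq_single_of_mem x hx, cinner_XZ_mulVec_XZ_mulVec_self, hψ,
    Nat.cast_one]
  intro y hy hyx
  rw [cinner_XZ_mulVec_XZ_mulVec, hstab _ fun h => hyx (hR y hy x hx h), mul_zero]

lemma cinner_sumXZ (hψ : cinner ψ ψ = 1) (hstab : ∀ v ∉ S, cinner ψ (XZ p n v *ᵥ ψ) = 0)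
    (hR : ∀ x ∈ R, ∀ y ∈ R, x - y ∈ S → x = y) (h0R : 0 ∈ R) : cinner ψ (sumXZ R ψ) = 1 := by
  rw [sumXZ, cinner_sum_right, sum_eq_single_of_mem 0 h0R, XZ_zero, one_mulVec, hψ]
  intro x hx hx0
  exact hstab x fun h => hx0 (hR x hx 0 h0R (by rwa [sub_zero]))

lemma norm_cinner_XZ_mulVec_sumXZ_le_one (hψ : cinner ψ ψ = 1)
    (hstab : ∀ v ∉ S, cinner ψ (XZ p n v *ᵥ ψ) = 0) (hR : ∀ x ∈ R, ∀ y ∈ R, x - y ∈ S → x = y)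
    (v : Fin n → ZMod p × ZMod p) : ‖cinner ψ (XZ p n v *ᵥ sumXZ R ψ)‖ ≤ 1 := by
  have hsupp : ∀ x, cinner ψ (XZ p n v *ᵥ (XZ p n x *ᵥ ψ)) ≠ 0 → v + x ∈ S := fun x hx => by
    by_contra hvx
    rw [XZ_mulVec_XZ_mulVec, cinner_smul_right, hstab _ hvx, mul_zero] at hx
    exact hx rfl
  rw [sumXZ, mulVec_sum, cinner_sum_right]
  refine norm_sum_le_one_of_unique_nonzero _ _ (fun x _ => ?_) fun x hx y hy hfx hfy => ?_
  · exact norm_cinner_le_one hψ (by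
      rw [cinner_XZ_mulVec_XZ_mulVec_self, cinner_XZ_mulVec_XZ_mulVec_self, hψ])
  · refine hR x hx y hy ?_
    simpa using S.sub_mem (hsupp x hfx) (hsupp y hfy)

lemma norm_cinner_sumXZ_XZ_mulVec_le_one (hψ : cinner ψ ψ = 1)
    (hstab : ∀ v ∉ S, cinner ψ (XZ p n v *ᵥ ψ) = 0) (hR : ∀ x ∈ R, ∀ y ∈ R, x - y ∈ S → x = y)
    (v : Fin n → ZMod p × ZMod p) : ‖cinner (sumXZ R ψ) (XZ p n v *ᵥ ψ)‖ ≤ 1 := by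
  rw [cinner_conj_symm, Complex.norm_conj, cinner_mulVec_left, XZ_conjTranspose, smul_mulVec,
    cinner_smul_right, norm_mul, AddChar.norm_apply, one_mul]
  exact norm_cinner_XZ_mulVec_sumXZ_le_one hψ hstab hR (-v)

lemma cinner_sumXZ_XZ_mulVec_sumXZ (hstab : ∀ v ∉ S, cinner ψ (XZ p n v *ᵥ ψ) = 0)
    (hR : ∀ x ∈ R, ∀ y ∈ R, x - y ∈ S → x = y) {e : Fin n → ZMod p × ZMod p} (he : e ∈ S) :
    cinner (sumXZ R ψ) (XZ p n e *ᵥ sumXZ R ψ) =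
      (∑ x ∈ R, stdAddChar (symp p n e x)) * cinner ψ (XZ p n e *ᵥ ψ) := by
  rw [sumXZ, mulVec_sum, cinner_sum_left, sum_mul]
  refine sum_congr rfl fun x hx => ?_
  rw [cinner_sum_right, sum_eq_single_of_mem x hx, cinner_XZ_mulVec_conj]
  intro y hy hyx
  have hS : e + y - x ∉ S := by
    intro h
    have h' := S.sub_mem h he
    rw [add_sub_assoc, add_sub_cancel_left] at h'
    exact hyx (hR y hy x hx h')
  rw [XZ_mulVec_XZ_mulVec, cinner_smul_right, cinner_XZ_mulVec_XZ_mulVec, hstab _ hS, mul_zero,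
    mul_zero]

end CodeState

theorem badcodeword_bound_general (p n k : ℕ) [Fact p.Prime]
    (C Cmax : Submodule (ZMod p) (Fin n → ZMod p × ZMod p))
    (hkn : k ≤ n)
    (hdimC : Module.finrank (ZMod p) C = n - k)
    (hsub : ∀ u ∈ Cmax, ∀ c ∈ C, symp p n c u = 0)
    (hmax : ∀ u, u ∈ Cmax ↔ ∀ c ∈ Cmax, symp p n c u = 0)
    (ψ1 : (Fin n → ZMod p) → ℂ) (hψ1 : cinner ψ1 ψ1 = 1)
    (heig : ∀ c ∈ Cmax, ∃ lam : ℂ, XZ p n c *ᵥ ψ1 = lam • ψ1)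
    (R : Finset (Fin n → ZMod p × ZMod p)) (h0R : 0 ∈ R)
    (hRsub : ∀ x ∈ R, ∀ c ∈ C, symp p n c x = 0)
    (hRrep : ∀ v : Fin n → ZMod p × ZMod p, (∀ c ∈ C, symp p n c v = 0) →
      ∃! x, x ∈ R ∧ v - x ∈ Cmax)
    (ψ2 : (Fin n → ZMod p) → ℂ)
    (hψ2 : ψ2 = ((Real.sqrt (p ^ k) : ℝ) : ℂ)⁻¹ • ∑ x ∈ R, XZ p n x *ᵥ ψ1)
    (φ : (Fin n → ZMod p) → ℂ)
    (hφ : φ = ((Real.sqrt ((cinner (ψ1 + ψ2) (ψ1 + ψ2)).re) : ℝ) : ℂ)⁻¹ • (ψ1 + ψ2))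
    (e : Fin n → ZMod p × ZMod p) (heC : e ∉ C) :
    ‖cinner φ (XZ p n e *ᵥ φ)‖ ≤ 3 / 4 := by
  have hCmax : (sympForm p n).orthogonal Cmax = Cmax := by
    ext u
    rw [mem_orthogonal_sympForm, hmax]
  have hCmaxC : Cmax ≤ (sympForm p n).orthogonal C := fun u hu =>
    mem_orthogonal_sympForm.mpr (hsub u hu)
  have hR : IsCosetTransversal Cmax.toAddSubgroup ((sympForm p n).orthogonal C).toAddSubgroup R :=
    ⟨fun x hx => mem_orthogonal_sympForm.mpr (hRsub x hx),
      fun v hv => hRrep v (mem_orthogonal_sympForm.mp hv)⟩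
  have hRinj : ∀ x ∈ R, ∀ y ∈ R, x - y ∈ Cmax → x = y := fun x hx y hy => hR.eq_of_sub_mem hx hy
  have hstab : ∀ v ∉ Cmax, cinner ψ1 (XZ p n v *ᵥ ψ1) = 0 := fun v =>
    cinner_XZ_mulVec_eq_zero_of_notMem hψ1 (fun u => (hmax u).mpr) heig
  set t : ℝ := (Real.sqrt (p ^ k))⁻¹ with ht
  have ht0 : 0 ≤ t := by positivity
  have htR : t * t * #R = 1 := by
    rw [hR.card_eq_pow_of_orthogonal hkn hdimC hCmax hCmaxC, ht, ← mul_inv, Nat.cast_pow,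
      Real.mul_self_sqrt (by positivity), inv_mul_cancel₀ (by simp [NeZero.ne p])]
  have hψ2t : ψ2 = (t : ℂ) • sumXZ R ψ1 := by rw [hψ2, sumXZ, Complex.ofReal_inv]
  refine norm_cinner_normalize_add_le_three_quarters (XZ_conjTranspose_mul_self e) ht0 hψ1
    ?_ ?_ ?_ ?_ ?_ hφ
  · rw [hψ2t, cinner_smul_left, cinner_smul_right, cinner_sumXZ_self hψ1 hstab hRinj,
      Complex.conj_ofReal, ← mul_assoc]
    exact_mod_cast htR
  · rw [hψ2t, cinner_smul_right, cinner_sumXZ hψ1 hstab hRinj h0R, mul_one]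
  · rw [hψ2t, mulVec_smul, cinner_smul_right]
    exact norm_ofReal_mul_le ht0 (norm_cinner_XZ_mulVec_sumXZ_le_one hψ1 hstab hRinj e)
  · rw [hψ2t, cinner_smul_left, Complex.conj_ofReal]
    exact norm_ofReal_mul_le ht0 (norm_cinner_sumXZ_XZ_mulVec_le_one hψ1 hstab hRinj e)
  · by_cases he : e ∈ Cmax
    · right
      rw [hψ2t, cinner_ofReal_smul_mulVec, cinner_sumXZ_XZ_mulVec_sumXZ hstab hRinj he,
        hR.sum_stdAddChar_symp_eq_zero hCmaxC (fun h hh => (hmax e).mp he h hh)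
          (exists_symp_ne_zero_of_notMem heC), zero_mul, mul_zero]
    · exact Or.inl (hstab e he)

/-- In the badcodeword construction, the normalized vector
`φ = (ψ1 + ψ2)/‖ψ1 + ψ2‖` satisfies `|⟨φ, XZ(e)φ⟩| ≤ 3/4` for every
`e ∈ C^⊥ \ C`. -/
theorem badcodeword_bound (p n k : ℕ) [Fact p.Prime]
    (C Cmax : Submodule (ZMod p) (Fin n → ZMod p × ZMod p))
    (hkn : k ≤ n)
    (hdimC : Module.finrank (ZMod p) C = n - k)
    (hCself : ∀ u ∈ C, ∀ c ∈ C, symp p n c u = 0)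
    (hCsub : C ≤ Cmax)
    (hsub : ∀ u ∈ Cmax, ∀ c ∈ C, symp p n c u = 0)
    (hmax : ∀ u, u ∈ Cmax ↔ ∀ c ∈ Cmax, symp p n c u = 0)
    (ψ1 : (Fin n → ZMod p) → ℂ) (hψ1 : cinner ψ1 ψ1 = 1)
    (heig : ∀ c ∈ Cmax, ∃ lam : ℂ, XZ p n c *ᵥ ψ1 = lam • ψ1)
    (R : Finset (Fin n → ZMod p × ZMod p)) (h0R : 0 ∈ R)
    (hRsub : ∀ x ∈ R, ∀ c ∈ C, symp p n c x = 0)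
    (hRrep : ∀ v : Fin n → ZMod p × ZMod p, (∀ c ∈ C, symp p n c v = 0) →
      ∃! x, x ∈ R ∧ v - x ∈ Cmax)
    (ψ2 : (Fin n → ZMod p) → ℂ)
    (hψ2 : ψ2 = ((Real.sqrt (p ^ k) : ℝ) : ℂ)⁻¹ • ∑ x ∈ R, XZ p n x *ᵥ ψ1)
    (φ : (Fin n → ZMod p) → ℂ)
    (hφ : φ = ((Real.sqrt ((cinner (ψ1 + ψ2) (ψ1 + ψ2)).re) : ℝ) : ℂ)⁻¹ • (ψ1 + ψ2))
    (e : Fin n → ZMod p × ZMod p) (he : ∀ c ∈ C, symp p n c e = 0) (heC : e ∉ C) :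
    ‖cinner φ (XZ p n e *ᵥ φ)‖ ≤ 3 / 4 :=
  badcodeword_bound_general p n k C Cmax hkn hdimC hsub hmax ψ1 hψ1 heig R h0R hRsub hRrep ψ2 hψ2 φ
    hφ e heC
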